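/- With the parameterized unit vectors |ψ(θ)⟩ as above (generators of unit norm), if ⟨ψ(θ)|ψ(θ')⟩ = -1 then the parameters satisfy ‖θ - θ'‖_1 ≥ 2. -/

import Mathlib

/-!
Each factor `exp (θⱼ Aⱼ)` is unitary, so the product moves by at most the sum of the moves of its
factors, and `t ↦ exp (t A)` is `‖A‖`-Lipschitz since its derivative `exp (t A) A` has norm `‖A‖`.
Hence `‖ψ(θ) - ψ(θ')‖ ≤ ‖θ - θ'‖₁`. On the other side, if `⟪x, y⟫ = -1` then Cauchy–Schwarz gives
`‖x - y‖² = ‖x‖² + ‖y‖² + 2 ≥ 2‖x‖‖y‖ + 2 ≥ 4`.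
-/

open NormedSpace

section Unitary

variable {R : Type*} [NormedRing R] [StarRing R] [CStarRing R]

theorem norm_mul_sub_mul_le_of_mem_unitary {a b c d : R} (ha : a ∈ unitary R)
    (hd : d ∈ unitary R) : ‖a * b - c * d‖ ≤ ‖a - c‖ + ‖b - d‖ :=
  calc ‖a * b - c * d‖ = ‖a * (b - d) + (a - c) * d‖ := by noncomm_ring
    _ ≤ ‖a * (b - d)‖ + ‖(a - c) * d‖ := norm_add_le _ _
    _ = ‖a - c‖ + ‖b - d‖ := by
      rw [CStarRing.norm_mem_unitary_mul _ ha, CStarRing.norm_mul_mem_unitary _ hd, add_comm]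

theorem norm_prod_ofFn_reverse_sub_le {n : ℕ} {u v : Fin n → R} (hu : ∀ i, u i ∈ unitary R)
    (hv : ∀ i, v i ∈ unitary R) :
    ‖(List.ofFn u).reverse.prod - (List.ofFn v).reverse.prod‖ ≤ ∑ i, ‖u i - v i‖ := by
  induction n with
  | zero => simp
  | succ n ih =>
    have hprod : (List.ofFn fun i => v (Fin.castSucc i)).reverse.prod ∈ unitary R :=
      Submonoid.list_prod_mem _ fun x hx => by
        obtain ⟨i, rfl⟩ := List.mem_ofFn.mp (List.mem_reverse.mp hx)
        exact hv _
    simp only [List.ofFn_succ', List.concat_eq_append, List.reverse_append, List.reverse_singleton,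
      List.singleton_append, List.prod_cons, Fin.sum_univ_castSucc]
    calc _ ≤ _ := norm_mul_sub_mul_le_of_mem_unitary (hu _) hprod
      _ ≤ _ := by
        rw [add_comm]
        gcongr
        exact ih (fun i => hu _) (fun i => hv _)

end Unitary

section Exp

variable {A : Type*} [NormedRing A] [NormedAlgebra ℝ A] [CompleteSpace A] [StarRing A]
  [CStarRing A] [StarModule ℝ A]

theorem exp_smul_mem_unitary {a : A} (ha : a ∈ skewAdjoint A) (t : ℝ) :
    exp (t • a) ∈ unitary A :=
  -- `exp` does not depend on the `ℚ`-algebra structure; this one only serves the library lemma.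
  let +nondep : NormedAlgebra ℚ A := .restrictScalars ℚ ℝ A
  exp_mem_unitary_of_mem_skewAdjoint (skewAdjoint.smul_mem t ha)

theorem lipschitzWith_exp_smul {a : A} (ha : a ∈ skewAdjoint A) :
    LipschitzWith ‖a‖₊ fun t : ℝ => exp (t • a) :=
  lipschitzOnWith_univ.mp <| convex_univ.lipschitzOnWith_of_nnnorm_hasDerivWithin_le
    (fun t _ => (hasDerivAt_exp_smul_const a t).hasDerivWithinAt) fun t _ => by
      rw [← NNReal.coe_le_coe, coe_nnnorm, coe_nnnorm,
        CStarRing.norm_mem_unitary_mul _ (exp_smul_mem_unitary ha t)]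

end Exp

theorem two_le_norm_sub_of_inner_eq_neg_one {𝕜 F : Type*} [RCLike 𝕜] [NormedAddCommGroup F]
    [InnerProductSpace 𝕜 F] {x y : F} (h : inner 𝕜 x y = -1) : 2 ≤ ‖x - y‖ := by
  have hcs : 1 ≤ ‖x‖ * ‖y‖ := by simpa [h] using norm_inner_le_norm (𝕜 := 𝕜) x y
  have hsq : ‖x - y‖ ^ 2 = ‖x‖ ^ 2 + ‖y‖ ^ 2 + 2 := by
    rw [norm_sub_sq (𝕜 := 𝕜), h, map_neg, RCLike.one_re]; ring
  nlinarith [norm_nonneg (x - y), sq_nonneg (‖x‖ - ‖y‖)]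

open NormedSpace in
/-- With `|ψ(θ)⟩ = Πⱼ exp(Aⱼ θⱼ)|ψ₀⟩` (skew-Hermitian generators of unit norm,
`ψ₀` a unit vector), if `⟨ψ(θ)|ψ(θ')⟩ = -1` then `‖θ - θ'‖₁ ≥ 2`. -/
theorem overlap_neg_one_implies_param_one_norm_ge_two
    {E : Type*} [NormedAddCommGroup E] [InnerProductSpace ℂ E] [CompleteSpace E]
    (n : ℕ) (A : Fin n → (E →L[ℂ] E))
    (hskew : ∀ j, ContinuousLinearMap.adjoint (A j) = -(A j))
    (hnorm : ∀ j, ‖A j‖ = 1)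
    (ψ₀ : E) (hψ₀ : ‖ψ₀‖ = 1)
    (θ θ' : Fin n → ℝ)
    (ψ : (Fin n → ℝ) → E)
    (hψ : ∀ ϑ : Fin n → ℝ,
      ψ ϑ = (((List.ofFn fun j => exp ((ϑ j : ℂ) • A j)).reverse).prod) ψ₀)
    (hoverlap : inner (𝕜 := ℂ) (ψ θ) (ψ θ') = (-1 : ℂ)) :
    2 ≤ ∑ j : Fin n, |θ j - θ' j| := by
  have hA (j : Fin n) : A j ∈ skewAdjoint (E →L[ℂ] E) :=
    skewAdjoint.mem_iff.mpr ((ContinuousLinearMap.star_eq_adjoint _).trans (hskew j))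
  set U : (Fin n → ℝ) → Fin n → E →L[ℂ] E := fun ϑ j => exp ((ϑ j : ℂ) • A j)
  have hU (ϑ : Fin n → ℝ) (j : Fin n) : U ϑ j ∈ unitary (E →L[ℂ] E) := by
    simpa only [U, Complex.coe_smul] using exp_smul_mem_unitary (hA j) (ϑ j)
  calc 2 ≤ ‖ψ θ - ψ θ'‖ := two_le_norm_sub_of_inner_eq_neg_one hoverlap
    _ = ‖((List.ofFn (U θ)).reverse.prod - (List.ofFn (U θ')).reverse.prod) ψ₀‖ := by
      rw [hψ, hψ]; rfl
    _ ≤ ‖(List.ofFn (U θ)).reverse.prod - (List.ofFn (U θ')).reverse.prod‖ := by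
      simpa only [hψ₀, mul_one] using ContinuousLinearMap.le_opNorm _ ψ₀
    _ ≤ ∑ j, ‖U θ j - U θ' j‖ := norm_prod_ofFn_reverse_sub_le (hU θ) (hU θ')
    _ ≤ ∑ j, |θ j - θ' j| := Finset.sum_le_sum fun j _ => by
      simpa only [U, Complex.coe_smul, dist_eq_norm, Real.norm_eq_abs, coe_nnnorm, hnorm,
        one_mul]
        using (lipschitzWith_exp_smul (hA j)).dist_le_mul (θ j) (θ' j)
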